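/- Let n ≥ 2, N = 2^n, and let u : Fin N → ℂ satisfy ‖u j‖ = 1 for all j. Then there exist Φ ∈ ℝ, an angle α_0 ∈ ℝ, angles α_S ∈ ℝ for every nonempty subset S ⊆ {1, …, n−1}, and v : Fin 2^(n−1) → ℂ with ‖v k‖ = 1 for all k, such that for every j ∈ Fin N (with last bit b_n = j mod 2): u(j) = exp(i·Φ) · (∏_{S nonempty ⊆ {1,…,n−1}} d_S(α_S)(j)) · exp(i·α_0·(−1)^(1 + b_n)/ 2) · v(⌊j/2⌋). Equivalently, Matrix.diagonal u equals exp(i·Φ) times the product of the commuting diagonal matrices ⊕_S[R_z(α_S)] over all nonempty S, times I_{2^(n−1)} ⊗ R_z(α_0), times (Matrix.diagonal v) ⊗ I_2. -/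

import Mathlib

/-- For `n ≥ 1` and `j < 2^n`, the quotient `j / 2` is a valid `(n-1)`-qubit index. -/
lemma div2_lt {n : ℕ} (hn : 1 ≤ n) (j : Fin (2^n)) : (j : ℕ) / 2 < 2^(n-1) := by
  have h : (2:ℕ)^n = 2^(n-1) * 2 := by
    conv_lhs => rw [show n = (n-1) + 1 by omega]
    rw [pow_succ]
  have hj := j.isLt
  omega

/-- Parity `⊕_{k ∈ S} b_k(m)` of the bits of `m` selected by `S`, where there are
`nLines` lines and line `k` holds bit position `nLines - k` (line 1 most significant). -/
def lineParity (nLines : ℕ) (S : Finset ℕ) (m : ℕ) : Bool :=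
  (S.filter fun k => Nat.testBit m (nLines - k) = true).card % 2 == 1

/-- Diagonal entries of the XOR-controlled rotation `⊕_S[R_z(α)]` on `n` qubits:
`exp(-i·α/2)` if `b_n ⊕ (⊕_{k∈S} b_k) = 0` and `exp(i·α/2)` otherwise. -/
noncomputable def dS (n : ℕ) (S : Finset ℕ) (α : ℝ) (m : Fin (2^n)) : ℂ :=
  if Nat.testBit (m : ℕ) 0 = lineParity n S (m : ℕ)
  then Complex.exp (-(Complex.I * (α : ℂ) / 2))
  else Complex.exp (Complex.I * (α : ℂ) / 2)

/-! Write `u j = exp (i θ_j)` and, for the pair `j = 2k + b`, split `θ_j` into the mean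
`μ_k = (θ_{2k} + θ_{2k+1})/2` and the signed half-difference `(-1)^(1+b) φ_k / 2`,
`φ_k = θ_{2k+1} - θ_{2k}`; the mean is the phase of `v k`. The rotation `⊕_S[R_z(α)]` multiplies
entry `2k + b` by `exp (i (-1)^(1+b) α χ_S(k) / 2)`, where `χ_S` is the Walsh character of `S`
on the first `n - 1` lines, so it remains to expand `φ` in Walsh characters (`S = ∅` giving `α₀`).
Such an expansion exists because the characters are orthogonal:
`∑_S χ_S(k) χ_S(k') = ∏_i (1 + ε_i(k) ε_i(k')) = 2^(n-1) δ_{k k'}`. -/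

open Finset Complex

def bitSign (k p : ℕ) : ℝ := if k.testBit p then -1 else 1

def walsh (m : ℕ) (S : Finset ℕ) (k : ℕ) : ℝ := ∏ i ∈ S, bitSign k (m - i)

@[simp] lemma walsh_empty (m k : ℕ) : walsh m ∅ k = 1 := prod_empty

lemma walsh_eq_ite_lineParity (m : ℕ) (S : Finset ℕ) (k : ℕ) :
    walsh m S k = if lineParity m S k then -1 else 1 := by
  rw [walsh, lineParity]
  simp only [bitSign, prod_ite, prod_const, one_pow, mul_one]
  rcases Nat.even_or_odd (#{i ∈ S | k.testBit (m - i) = true}) with h | h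
  · simp [h.neg_one_pow, Nat.even_iff.mp h]
  · simp [h.neg_one_pow, Nat.odd_iff.mp h]

lemma sum_walsh_mul_walsh {m k k' : ℕ} (hk : k < 2 ^ m) (hk' : k' < 2 ^ m) :
    ∑ S ∈ (Icc 1 m).powerset, walsh m S k * walsh m S k' = if k = k' then 2 ^ m else 0 := by
  simp only [walsh, ← prod_mul_distrib, ← prod_add_one]
  split_ifs with h
  · subst h
    have : ∀ i, bitSign k (m - i) * bitSign k (m - i) + 1 = 2 := fun i => by
      unfold bitSign; split_ifs <;> norm_num
    simp [this]
  · obtain ⟨p, hp⟩ : ∃ p, k.testBit p ≠ k'.testBit p := by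
      by_contra! h'
      exact h (Nat.eq_of_testBit_eq h')
    have hpm : p < m := by
      by_contra! hmp
      exact hp <| (Nat.testBit_lt_two_pow (hk.trans_le (Nat.pow_le_pow_right two_pos hmp))).trans
        (Nat.testBit_lt_two_pow (hk'.trans_le (Nat.pow_le_pow_right two_pos hmp))).symm
    refine prod_eq_zero (i := m - p) (mem_Icc.mpr ⟨by omega, by omega⟩) ?_
    rw [show m - (m - p) = p by omega, bitSign, bitSign]
    revert hp
    cases k.testBit p <;> cases k'.testBit p <;> norm_num

lemma exists_walsh_expansion (m : ℕ) (φ : ℕ → ℝ) :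
    ∃ α : Finset ℕ → ℝ, ∀ k < 2 ^ m, ∑ S ∈ (Icc 1 m).powerset, α S * walsh m S k = φ k := by
  refine ⟨fun S => (∑ k' ∈ range (2 ^ m), φ k' * walsh m S k') / 2 ^ m, fun k hk => ?_⟩
  calc ∑ S ∈ (Icc 1 m).powerset, (∑ k' ∈ range (2 ^ m), φ k' * walsh m S k') / 2 ^ m * walsh m S k
      = (∑ k' ∈ range (2 ^ m), φ k' *
          ∑ S ∈ (Icc 1 m).powerset, walsh m S k' * walsh m S k) / 2 ^ m := by
        simp only [div_mul_eq_mul_div, ← sum_div, sum_mul, mul_sum]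
        rw [sum_comm]
        simp only [mul_assoc]
    _ = φ k := by
        rw [sum_congr rfl fun k' hk' => by rw [sum_walsh_mul_walsh (mem_range.mp hk') hk]]
        simp [hk]

lemma lineParity_eq_lineParity_div_two {n : ℕ} {S : Finset ℕ} (hS : ∀ i ∈ S, i < n) (j : ℕ) :
    lineParity n S j = lineParity (n - 1) S (j / 2) := by
  have hbits : ∀ i ∈ S, j.testBit (n - i) = (j / 2).testBit (n - 1 - i) := fun i hi => by
    rw [Nat.testBit_div_two, show n - 1 - i + 1 = n - i by have := hS i hi; omega]
  rw [lineParity, lineParity, filter_congr fun i hi => by rw [hbits i hi]]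

lemma dS_eq_exp_walsh {n : ℕ} {S : Finset ℕ} (hS : ∀ i ∈ S, i < n) (α : ℝ) (j : Fin (2 ^ n)) :
    dS n S α j =
      exp (I * α * (-1) ^ (1 + (j : ℕ) % 2) * (walsh (n - 1) S ((j : ℕ) / 2) : ℂ) / 2) := by
  rw [dS, walsh_eq_ite_lineParity, lineParity_eq_lineParity_div_two hS, Nat.testBit_zero]
  rcases Nat.mod_two_eq_zero_or_one (j : ℕ) with hb | hb <;>
    cases lineParity (n - 1) S ((j : ℕ) / 2) <;> simp [hb] <;> ring_nf

lemma prod_dS_mul_exp_eq_exp_sum {n : ℕ} (α : Finset ℕ → ℝ) (j : Fin (2 ^ n)) :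
    (∏ S ∈ (Icc 1 (n - 1)).powerset.erase ∅, dS n S (α S) j) *
        exp (I * α ∅ * (-1) ^ (1 + (j : ℕ) % 2) / 2) =
      exp (I * (-1) ^ (1 + (j : ℕ) % 2) *
        ((∑ S ∈ (Icc 1 (n - 1)).powerset, α S * walsh (n - 1) S ((j : ℕ) / 2) : ℝ) : ℂ) / 2) := by
  have hdS : ∀ S ∈ (Icc 1 (n - 1)).powerset, dS n S (α S) j =
      exp (I * α S * (-1) ^ (1 + (j : ℕ) % 2) * (walsh (n - 1) S ((j : ℕ) / 2) : ℂ) / 2) :=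
    fun S hS => dS_eq_exp_walsh (fun i hi => by
      have := mem_Icc.mp (mem_powerset.mp hS hi); omega) _ j
  have hempty : exp (I * α ∅ * (-1) ^ (1 + (j : ℕ) % 2) / 2) = dS n ∅ (α ∅) j := by
    rw [hdS ∅ (empty_mem_powerset _), walsh_empty, ofReal_one, mul_one]
  rw [hempty, prod_erase_mul _ _ (empty_mem_powerset _), prod_congr rfl hdS, ← exp_sum]
  push_cast
  rw [mul_sum, sum_div]
  exact congrArg exp (sum_congr rfl fun S _ => by ring)

lemma eq_midpoint_add_sign_mul_half_sub (θ : ℕ → ℝ) (j : ℕ) :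
    θ j = (θ (2 * (j / 2)) + θ (2 * (j / 2) + 1)) / 2 +
      (-1) ^ (1 + j % 2) * (θ (2 * (j / 2) + 1) - θ (2 * (j / 2))) / 2 := by
  rcases Nat.mod_two_eq_zero_or_one j with hb | hb
  · rw [hb, show 2 * (j / 2) = j by omega]; ring
  · rw [hb, show 2 * (j / 2) + 1 = j by omega]; ring

/-- every diagonal unitary `u` on `n ≥ 2` qubits decomposes as a global phase
times the product of XOR-controlled rotations `⊕_S[R_z(α_S)]` over all nonempty
`S ⊆ {1, …, n-1}`, times `I ⊗ R_z(α₀)` on the last line, times a diagonal `v` on the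
first `n-1` lines (entrywise: the last bit is `b_n = j % 2`). -/
theorem diagonal_decomposes_via_xor_rotations (n : ℕ) (hn : 2 ≤ n)
    (u : Fin (2^n) → ℂ) (hu : ∀ j, ‖u j‖ = 1) :
    ∃ (Φ α₀ : ℝ) (αf : Finset ℕ → ℝ) (v : Fin (2^(n-1)) → ℂ),
      (∀ k, ‖v k‖ = 1) ∧
      ∀ j : Fin (2^n),
        u j = Complex.exp (Complex.I * (Φ : ℂ)) *
          (∏ S ∈ (Finset.Icc 1 (n-1)).powerset.erase ∅, dS n S (αf S) j) *
          Complex.exp (Complex.I * (α₀ : ℂ) * (-1)^(1 + (j : ℕ) % 2) / 2) *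
          v ⟨(j : ℕ) / 2, div2_lt (by omega) j⟩ := by
  set θ : ℕ → ℝ := fun m => arg (u (Fin.ofNat (2 ^ n) m)) with hθ
  obtain ⟨α, hα⟩ := exists_walsh_expansion (n - 1) fun k => θ (2 * k + 1) - θ (2 * k)
  refine ⟨0, α ∅, α, fun k => exp (((θ (2 * k) + θ (2 * k + 1)) / 2 : ℝ) * I),
    fun k => norm_exp_ofReal_mul_I _, fun j => ?_⟩
  have hpolar : u j = exp (θ j * I) := by
    simpa [hθ, hu j] using (norm_mul_exp_arg_mul_I (u j)).symm
  rw [mul_assoc _ (∏ _ ∈ _, _), prod_dS_mul_exp_eq_exp_sum, hα _ (div2_lt (by omega) j), hpolar,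
    ofReal_zero, mul_zero, exp_zero, one_mul, ← exp_add, eq_midpoint_add_sign_mul_half_sub θ j]
  push_cast
  congr 1
  ring
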